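/- arXiv:2601.18394 — 4 statements merged into one kernel-verified Lean document; each statement's English description precedes it below -/
import Mathlib

section
/- Let f : [0,ε₀] → ℝ be strictly increasing with f(0)=0 and f(x) = x + x^{α+1} for 0 < α < 1, and let (z_n) be defined by z₀ = ε₀ and f(z_{n+1}) = z_n for all n ≥ 0. Then there exists C ≥ 1 such that C⁻¹·n^{−1/α} ≤ z_n ≤ C·n^{−1/α} for all n ≥ 1. -/
open Set

/-- Increment bounds for the function `t ↦ 1 - (1+t)^(-α)`: for `0 < t ≤ T`,
`α/(1+T) * t ≤ 1 - (1+t)^(-α) ≤ α * t`. -/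
lemma incr_bounds_aux {α t T : ℝ} (hα : 0 < α) (hα1 : α < 1) (ht : 0 < t) (htT : t ≤ T) :
    α / (1 + T) * t ≤ 1 - (1 + t) ^ (-α) ∧ 1 - (1 + t) ^ (-α) ≤ α * t := by
  have hu : (0:ℝ) < 1 + t := by linarith
  have hu1 : (1:ℝ) ≤ 1 + t := by linarith
  have hTpos : (0:ℝ) < 1 + T := by linarith
  set s := (1 + t) ^ α with hs
  set r := (1 + t) ^ (α - 1) with hr
  have hsp : (0:ℝ) < s := Real.rpow_pos_of_pos hu α
  have hrp : (0:ℝ) < r := Real.rpow_pos_of_pos hu (α - 1)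
  have hs1 : (1:ℝ) ≤ s := Real.one_le_rpow hu1 hα.le
  have hsr : s = r * (1 + t) := by
    rw [hs, hr, ← Real.rpow_add_one hu.ne' (α - 1)]
    ring_nf
  have hinv : (1 + t) ^ (-α) = s⁻¹ := by
    rw [hs, ← Real.rpow_neg hu.le]
  have hfrac : 1 - s⁻¹ = (s - 1) * s⁻¹ := by field_simp
  constructor
  · -- lower bound via AM-GM
    have amgm := Real.geom_mean_le_arith_mean2_weighted (by linarith : (0:ℝ) ≤ 1 - α)
      hα.le (Real.rpow_nonneg hu.le α) (Real.rpow_nonneg hu.le (α - 1)) (by ring)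
    have hone : ((1+t) ^ α) ^ (1 - α) * ((1+t) ^ (α-1)) ^ (α) = 1 := by
      rw [← Real.rpow_mul hu.le, ← Real.rpow_mul hu.le, ← Real.rpow_add hu,
        show α * (1 - α) + (α - 1) * α = 0 by ring, Real.rpow_zero]
    rw [hone] at amgm
    -- amgm : 1 ≤ (1-α) * s + α * r
    have key : α * t * r ≤ s - 1 := by nlinarith [hsr]
    have h2 : α / (1 + T) * t * s ≤ s - 1 := by
      rw [div_mul_eq_mul_div, div_mul_eq_mul_div, div_le_iff₀ hTpos]
      calc α * t * s = α * t * r * (1 + t) := by rw [hsr]; ring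
        _ ≤ (s - 1) * (1 + t) := by
            apply mul_le_mul_of_nonneg_right key hu.le
        _ ≤ (s - 1) * (1 + T) := by
            apply mul_le_mul_of_nonneg_left (by linarith) (by linarith)
    rw [hinv, hfrac]
    calc α / (1 + T) * t = (α / (1 + T) * t * s) * s⁻¹ := by field_simp
      _ ≤ (s - 1) * s⁻¹ := mul_le_mul_of_nonneg_right h2 (inv_nonneg.mpr hsp.le)
  · -- upper bound via Bernoulli
    have bern : (1 + t) ^ α ≤ 1 + α * t :=
      rpow_one_add_le_one_add_mul_self (by linarith) hα.le hα1.le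
    rw [hinv, hfrac]
    calc (s - 1) * s⁻¹ ≤ (s - 1) * 1 := by
          apply mul_le_mul_of_nonneg_left _ (by linarith)
          exact inv_le_one_of_one_le₀ hs1
      _ = s - 1 := by ring
      _ ≤ α * t := by rw [hs]; linarith [bern]

theorem backward_orbit_asymptotic
    (f : ℝ → ℝ) (α ε₀ : ℝ) (hα : 0 < α) (hα1 : α < 1)
    (hε₀ : 0 < ε₀)
    (hmono : StrictMonoOn f (Icc 0 ε₀))
    (hf0 : f 0 = 0)
    (hform : ∀ x ∈ Ioc (0:ℝ) ε₀, f x = x + x ^ (α + 1))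
    (z : ℕ → ℝ) (hz0 : z 0 = ε₀)
    (hzmem : ∀ n, z n ∈ Ioc (0:ℝ) ε₀)
    (hz : ∀ n, f (z (n + 1)) = z n) :
    ∃ C : ℝ, 1 ≤ C ∧ ∀ n : ℕ, 1 ≤ n →
      C⁻¹ * (n : ℝ) ^ (-(1 / α)) ≤ z n ∧ z n ≤ C * (n : ℝ) ^ (-(1 / α)) := by
  have hαne : α ≠ 0 := hα.ne'
  set T := ε₀ ^ α with hT
  have hTpos : 0 < T := Real.rpow_pos_of_pos hε₀ α
  set a := α / (1 + T) with ha
  have hapos : 0 < a := div_pos hα (by linarith)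
  set b := ε₀ ^ (-α) + α with hb
  have hw0pos : 0 < ε₀ ^ (-α) := Real.rpow_pos_of_pos hε₀ (-α)
  have hbpos : 0 < b := by positivity
  have hzpos : ∀ n, 0 < z n := fun n => (hzmem n).1
  have hzle : ∀ n, z n ≤ ε₀ := fun n => (hzmem n).2
  have hrec : ∀ n, z n = z (n+1) + (z (n+1)) ^ (α+1) := fun n => by
    rw [← hz n, hform _ (hzmem (n+1))]
  -- increment bounds on w n = (z n)^(-α)
  have hstep : ∀ n, a + (z n) ^ (-α) ≤ (z (n+1)) ^ (-α) ∧
      (z (n+1)) ^ (-α) ≤ (z n) ^ (-α) + α := by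
    intro n
    set y := z (n+1) with hy'
    have hy : 0 < y := hzpos (n+1)
    set t := y ^ α with htdef
    have ht : 0 < t := Real.rpow_pos_of_pos hy α
    have htT : t ≤ T := Real.rpow_le_rpow hy.le (hzle (n+1)) hα.le
    have hzn : z n = y * (1 + t) := by
      rw [hrec n, Real.rpow_add_one hy.ne' α, htdef]
      ring
    have hwn : (z n) ^ (-α) = t⁻¹ * (1 + t) ^ (-α) := by
      rw [hzn, Real.mul_rpow hy.le (by linarith), Real.rpow_neg hy.le, htdef]
    have hw1 : y ^ (-α) = t⁻¹ := by rw [Real.rpow_neg hy.le, htdef]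
    obtain ⟨hlo, hhi⟩ := incr_bounds_aux hα hα1 ht htT
    have hexp : t⁻¹ * (1 - (1 + t) ^ (-α)) = t⁻¹ - t⁻¹ * (1 + t) ^ (-α) := by ring
    constructor
    · rw [hwn, hw1]
      have h2 := mul_le_mul_of_nonneg_left hlo (inv_nonneg.mpr ht.le)
      have h3 : t⁻¹ * (a * t) = a := by field_simp
      rw [hexp, h3] at h2
      linarith
    · rw [hwn, hw1]
      have h2 := mul_le_mul_of_nonneg_left hhi (inv_nonneg.mpr ht.le)
      have h3 : t⁻¹ * (α * t) = α := by field_simp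
      rw [hexp, h3] at h2
      linarith
  -- linear growth of w n
  have hind : ∀ n : ℕ, a * n ≤ (z n) ^ (-α) ∧ (z n) ^ (-α) ≤ ε₀ ^ (-α) + α * n := by
    intro n
    induction n with
    | zero =>
      constructor
      · simp only [Nat.cast_zero, mul_zero]
        exact (Real.rpow_pos_of_pos (hzpos 0) (-α)).le
      · simp [hz0]
    | succ k ih =>
      obtain ⟨ih1, ih2⟩ := ih
      obtain ⟨st1, st2⟩ := hstep k
      push_cast
      constructor
      · linarith
      · linarith
  -- conclusion
  refine ⟨max 1 (max (a ^ (-(1/α))) (b ^ (1/α))), le_max_left _ _, fun n hn => ?_⟩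
  set C := max 1 (max (a ^ (-(1/α))) (b ^ (1/α))) with hC
  have hCa : a ^ (-(1/α)) ≤ C := le_trans (le_max_left _ _) (le_max_right _ _)
  have hCb : b ^ (1/α) ≤ C := le_trans (le_max_right _ _) (le_max_right _ _)
  have hn1 : (1:ℝ) ≤ (n:ℝ) := by exact_mod_cast hn
  have hnpos : (0:ℝ) < (n:ℝ) := by linarith
  have hwl : a * n ≤ (z n) ^ (-α) := (hind n).1
  have hwu : (z n) ^ (-α) ≤ b * n := by
    have := (hind n).2
    have h4 : ε₀ ^ (-α) ≤ ε₀ ^ (-α) * n := le_mul_of_one_le_right hw0pos.le hn1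
    rw [hb]
    nlinarith
  have hzid : ((z n) ^ (-α)) ^ (-(1/α)) = z n := by
    rw [← Real.rpow_mul (hzpos n).le,
      show (-α) * (-(1/α)) = 1 by field_simp, Real.rpow_one]
  have hneg : -(1/α) ≤ 0 := by
    simp only [neg_nonpos]
    positivity
  constructor
  · -- lower bound on z n
    have h2 : (b * n) ^ (-(1/α)) ≤ z n := by
      rw [← hzid]
      exact Real.rpow_le_rpow_of_nonpos (Real.rpow_pos_of_pos (hzpos n) (-α)) hwu hneg
    have h3 : (b * n) ^ (-(1/α)) = b ^ (-(1/α)) * (n:ℝ) ^ (-(1/α)) :=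
      Real.mul_rpow hbpos.le hnpos.le
    have h5 : C⁻¹ ≤ b ^ (-(1/α)) := by
      rw [Real.rpow_neg hbpos.le]
      exact inv_anti₀ (Real.rpow_pos_of_pos hbpos _) hCb
    calc C⁻¹ * (n:ℝ) ^ (-(1/α)) ≤ b ^ (-(1/α)) * (n:ℝ) ^ (-(1/α)) :=
          mul_le_mul_of_nonneg_right h5 (Real.rpow_nonneg hnpos.le _)
      _ = (b * n) ^ (-(1/α)) := h3.symm
      _ ≤ z n := h2
  · -- upper bound on z n
    have h2 : z n ≤ (a * n) ^ (-(1/α)) := by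
      rw [← hzid]
      exact Real.rpow_le_rpow_of_nonpos (by positivity) hwl hneg
    have h3 : (a * n) ^ (-(1/α)) = a ^ (-(1/α)) * (n:ℝ) ^ (-(1/α)) :=
      Real.mul_rpow hapos.le hnpos.le
    calc z n ≤ (a * n) ^ (-(1/α)) := h2
      _ = a ^ (-(1/α)) * (n:ℝ) ^ (-(1/α)) := h3
      _ ≤ C * (n:ℝ) ^ (-(1/α)) :=
          mul_le_mul_of_nonneg_right hCa (Real.rpow_nonneg hnpos.le _)
end

section
/- Let a₁,b₁ > 0, c₂ > 0 and 0 < α < 1, and let φ : (0,1] → ℝ be C¹ and nonnegative, with |φ'(x)| ≤ (a₁/x + b₁)·φ(x) for all x ∈ (0,1] and φ(x) ≤ 2c₂·x^{−α}·∫₀¹φ dx for all x ∈ (0,1]. Then for every δ ∈ (0,1) with 2·c₂·δ^{1−α}/(1−α) ≤ 1/2, min_{x ∈ [δ,1]} φ(x) ≥ (δ^{a₁}/(2·e^{b₁(1−δ)}))·∫₀¹ φ(x) dx. -/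
open Set MeasureTheory

theorem min_lower_bound_on_cone
    (α a₁ b₁ c₂ δ : ℝ) (hα : 0 < α) (hα1 : α < 1)
    (ha₁ : 0 < a₁) (hb₁ : 0 < b₁) (hc₂ : 0 < c₂)
    (hδ : 0 < δ) (hδ1 : δ < 1)
    (hδsmall : 2 * c₂ * δ ^ (1 - α) / (1 - α) ≤ 1 / 2)
    (φ : ℝ → ℝ) (hC1 : ContDiffOn ℝ 1 φ (Ioc 0 1))
    (hpos : ∀ x ∈ Ioc (0:ℝ) 1, 0 ≤ φ x)
    (hlog : ∀ x ∈ Ioc (0:ℝ) 1, |deriv φ x| ≤ (a₁ / x + b₁) * φ x)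
    (hupper : ∀ x ∈ Ioc (0:ℝ) 1,
      φ x ≤ 2 * c₂ * x ^ (-α) * ∫ y in Ioo (0:ℝ) 1, φ y) :
    ∀ x ∈ Icc δ 1,
      φ x ≥ δ ^ a₁ / (2 * Real.exp (b₁ * (1 - δ))) * ∫ y in Ioo (0:ℝ) 1, φ y := by
  intro x hx
  have hx01 : x ∈ Ioc (0:ℝ) 1 := ⟨lt_of_lt_of_le hδ hx.1, hx.2⟩
  have hφx : 0 ≤ φ x := hpos x hx01
  set M := ∫ y in Ioo (0:ℝ) 1, φ y with hMdef
  have hMnn : 0 ≤ M := setIntegral_nonneg measurableSet_Ioo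
    (fun y hy => hpos y ⟨hy.1, hy.2.le⟩)
  rcases eq_or_lt_of_le hMnn with hM0 | hMpos
  · rw [← hM0]
    simpa using hφx
  -- Notation
  set E := Real.exp (b₁ * (1 - δ)) with hEdef
  have hEpos : 0 < E := Real.exp_pos _
  set C := δ ^ (-a₁) * E with hCdef
  have hPpos : (0:ℝ) < δ ^ a₁ := Real.rpow_pos_of_pos hδ _
  have hQpos : (0:ℝ) < δ ^ (-a₁) := Real.rpow_pos_of_pos hδ _
  have hPQ : δ ^ a₁ * δ ^ (-a₁) = 1 := by
    rw [← Real.rpow_add hδ]; simp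
  have hCpos : 0 < C := mul_pos hQpos hEpos
  -- differentiability facts
  have hφdiff : ∀ t ∈ Ioo (0:ℝ) 1, HasDerivAt φ (deriv φ t) t := by
    intro t ht
    have h1 : Ioc (0:ℝ) 1 ∈ nhds t :=
      mem_nhds_iff.mpr ⟨Ioo 0 1, Ioo_subset_Ioc_self, isOpen_Ioo, ht⟩
    exact ((hC1.differentiableOn one_ne_zero t ⟨ht.1, ht.2.le⟩).differentiableAt h1).hasDerivAt
  have hA : ∀ t ∈ Ioo (0:ℝ) 1, HasDerivAt (fun s => a₁ * Real.log s + b₁ * s)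
      (a₁ / t + b₁) t := by
    intro t ht
    have h1 := (Real.hasDerivAt_log ht.1.ne').const_mul a₁
    have h2 := (hasDerivAt_id t).const_mul b₁
    have := h1.add h2
    rw [show a₁ / t + b₁ = a₁ * t⁻¹ + b₁ * 1 by rw [div_eq_mul_inv, mul_one]]
    exact this
  have hsub : Icc δ 1 ⊆ Ioc (0:ℝ) 1 := fun t ht => ⟨lt_of_lt_of_le hδ ht.1, ht.2⟩
  have hintsub : Ioo δ 1 ⊆ Ioo (0:ℝ) 1 := fun t ht => ⟨lt_trans hδ ht.1, ht.2⟩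
  have hφcont : ContinuousOn φ (Icc δ 1) := (hC1.continuousOn).mono hsub
  have hAcont : ContinuousOn (fun s => a₁ * Real.log s + b₁ * s) (Icc δ 1) := by
    apply ContinuousOn.add
    · exact continuousOn_const.mul (Real.continuousOn_log.mono
        (fun t ht => ne_of_gt (lt_of_lt_of_le hδ ht.1)))
    · exact continuousOn_const.mul continuousOn_id
  -- g = φ * exp(-A) antitone, h = φ * exp(A) monotone on [δ,1]
  have hderivsum : ∀ t ∈ Ioo δ 1,
      HasDerivAt (fun s => φ s * Real.exp (a₁ * Real.log s + b₁ * s))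
        (deriv φ t * Real.exp (a₁ * Real.log t + b₁ * t) +
          φ t * (Real.exp (a₁ * Real.log t + b₁ * t) * (a₁ / t + b₁))) t := by
    intro t ht
    exact (hφdiff t (hintsub ht)).mul ((hA t (hintsub ht)).exp)
  have hderivneg : ∀ t ∈ Ioo δ 1,
      HasDerivAt (fun s => φ s * Real.exp (-(a₁ * Real.log s + b₁ * s)))
        (deriv φ t * Real.exp (-(a₁ * Real.log t + b₁ * t)) +
          φ t * (Real.exp (-(a₁ * Real.log t + b₁ * t)) * (-(a₁ / t + b₁)))) t := by
    intro t ht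
    exact (hφdiff t (hintsub ht)).mul ((hA t (hintsub ht)).neg.exp)
  have hbound : ∀ t ∈ Ioo δ 1,
      deriv φ t ≤ (a₁ / t + b₁) * φ t ∧ -((a₁ / t + b₁) * φ t) ≤ deriv φ t := by
    intro t ht
    have h := hlog t ⟨lt_trans hδ ht.1, ht.2.le⟩
    exact ⟨(abs_le.mp h).2, (abs_le.mp h).1⟩
  have hanti : AntitoneOn (fun s => φ s * Real.exp (-(a₁ * Real.log s + b₁ * s)))
      (Icc δ 1) := by
    apply antitoneOn_of_deriv_nonpos (convex_Icc δ 1)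
    · exact hφcont.mul (hAcont.neg.rexp)
    · rw [interior_Icc]
      intro t ht
      exact ((hderivneg t ht).differentiableAt).differentiableWithinAt
    · rw [interior_Icc]
      intro t ht
      rw [(hderivneg t ht).deriv]
      have hE' : 0 < Real.exp (-(a₁ * Real.log t + b₁ * t)) := Real.exp_pos _
      have := (hbound t ht).1
      nlinarith [hE']
  have hmono : MonotoneOn (fun s => φ s * Real.exp (a₁ * Real.log s + b₁ * s))
      (Icc δ 1) := by
    apply monotoneOn_of_deriv_nonneg (convex_Icc δ 1)
    · exact hφcont.mul (hAcont.rexp)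
    · rw [interior_Icc]
      intro t ht
      exact ((hderivsum t ht).differentiableAt).differentiableWithinAt
    · rw [interior_Icc]
      intro t ht
      rw [(hderivsum t ht).deriv]
      have hE' : 0 < Real.exp (a₁ * Real.log t + b₁ * t) := Real.exp_pos _
      have := (hbound t ht).2
      nlinarith [hE']
  -- pointwise bound on [δ,1]
  have hAbnd : ∀ y ∈ Icc δ 1, ∀ z ∈ Icc δ 1,
      (a₁ * Real.log y + b₁ * y) - (a₁ * Real.log z + b₁ * z)
        ≤ -(a₁ * Real.log δ) + b₁ * (1 - δ) := by
    intro y hy z hz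
    have h1 : Real.log y ≤ 0 := Real.log_nonpos (le_of_lt (lt_of_lt_of_le hδ hy.1)) hy.2
    have h2 : Real.log δ ≤ Real.log z := Real.log_le_log hδ hz.1
    nlinarith [hy.2, hz.1, ha₁.le, hb₁.le]
  have hkey : ∀ y ∈ Icc δ 1, φ y ≤ φ x * C := by
    intro y hy
    have hexpC : Real.exp (-(a₁ * Real.log δ) + b₁ * (1 - δ)) = C := by
      have hδa : δ ^ (-a₁) = Real.exp (-(a₁ * Real.log δ)) := by
        rw [Real.rpow_def_of_pos hδ]
        congr 1
        ring
      rw [hCdef, hEdef, hδa, ← Real.exp_add]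
    rcases le_total y x with hyx | hxy
    · have h := hmono hy hx hyx
      have hEy : 0 < Real.exp (a₁ * Real.log y + b₁ * y) := Real.exp_pos _
      have h2 : φ y ≤ φ x * Real.exp ((a₁ * Real.log x + b₁ * x)
          - (a₁ * Real.log y + b₁ * y)) := by
        rw [Real.exp_sub, mul_div_assoc']
        rw [le_div_iff₀ hEy]
        exact h
      refine h2.trans ?_
      have := Real.exp_le_exp.mpr (hAbnd x hx y hy)
      rw [hexpC] at this
      exact mul_le_mul_of_nonneg_left this hφx
    · have h := hanti hx hy hxy
      have hEy : 0 < Real.exp (-(a₁ * Real.log y + b₁ * y)) := Real.exp_pos _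
      have h2 : φ y ≤ φ x * Real.exp ((a₁ * Real.log y + b₁ * y)
          - (a₁ * Real.log x + b₁ * x)) := by
        have h3 := mul_le_mul_of_nonneg_right h
          (Real.exp_pos (a₁ * Real.log y + b₁ * y)).le
        calc φ y = φ y * Real.exp (-(a₁ * Real.log y + b₁ * y)) *
              Real.exp (a₁ * Real.log y + b₁ * y) := by
              rw [mul_assoc, ← Real.exp_add,
                show -(a₁ * Real.log y + b₁ * y) + (a₁ * Real.log y + b₁ * y) = 0 from by ring,
                Real.exp_zero, mul_one]
          _ ≤ φ x * Real.exp (-(a₁ * Real.log x + b₁ * x)) *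
              Real.exp (a₁ * Real.log y + b₁ * y) := h3
          _ = φ x * Real.exp ((a₁ * Real.log y + b₁ * y)
              - (a₁ * Real.log x + b₁ * x)) := by
              rw [mul_assoc, ← Real.exp_add]
              congr 1
              ring
      refine h2.trans ?_
      have := Real.exp_le_exp.mpr (hAbnd y hy x hx)
      rw [hexpC] at this
      exact mul_le_mul_of_nonneg_left this hφx
  -- integrability
  have hrpow_int : IntegrableOn (fun y : ℝ => y ^ (-α)) (Ioc 0 1) := by
    have := intervalIntegral.intervalIntegrable_rpow' (a := (0:ℝ)) (b := 1)
      (r := -α) (by linarith)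
    rwa [intervalIntegrable_iff_integrableOn_Ioc_of_le (by norm_num)] at this
  have hφmeas : AEStronglyMeasurable φ (volume.restrict (Ioc (0:ℝ) 1)) :=
    (hC1.continuousOn).aestronglyMeasurable measurableSet_Ioc
  have hφint : IntegrableOn φ (Ioc 0 1) := by
    apply Integrable.mono' (hrpow_int.const_mul (2 * c₂ * M)) hφmeas
    rw [ae_restrict_iff' measurableSet_Ioc]
    filter_upwards with y hy
    rw [Real.norm_eq_abs, abs_of_nonneg (hpos y hy)]
    calc φ y ≤ 2 * c₂ * y ^ (-α) * M := hupper y hy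
      _ = 2 * c₂ * M * y ^ (-α) := by ring
  -- ∫ over (0, δ] is at most M/2
  have hI0 : ∫ y in Ioc (0:ℝ) δ, φ y ≤ M / 2 := by
    have hmono' : ∫ y in Ioc (0:ℝ) δ, φ y ≤ ∫ y in Ioc (0:ℝ) δ, 2 * c₂ * M * y ^ (-α) := by
      apply setIntegral_mono_on
      · exact hφint.mono_set (Ioc_subset_Ioc_right hδ1.le)
      · exact (hrpow_int.mono_set (Ioc_subset_Ioc_right hδ1.le)).const_mul (2 * c₂ * M)
      · exact measurableSet_Ioc
      · intro y hy
        calc φ y ≤ 2 * c₂ * y ^ (-α) * M := hupper y ⟨hy.1, hy.2.trans hδ1.le⟩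
          _ = 2 * c₂ * M * y ^ (-α) := by ring
    have hval : ∫ y in Ioc (0:ℝ) δ, y ^ (-α) = δ ^ (1 - α) / (1 - α) := by
      rw [← intervalIntegral.integral_of_le hδ.le]
      rw [integral_rpow (Or.inl (by linarith))]
      rw [Real.zero_rpow (by linarith : -α + 1 ≠ 0)]
      norm_num
      rw [show -α + 1 = 1 - α by ring]
    have : ∫ y in Ioc (0:ℝ) δ, 2 * c₂ * M * y ^ (-α)
        = 2 * c₂ * M * (δ ^ (1 - α) / (1 - α)) := by
      rw [integral_const_mul, hval]
    rw [this] at hmono'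
    have h2 : 2 * c₂ * M * (δ ^ (1 - α) / (1 - α)) ≤ M * (1 / 2) := by
      have := mul_le_mul_of_nonneg_left hδsmall hMnn
      calc 2 * c₂ * M * (δ ^ (1 - α) / (1 - α))
          = M * (2 * c₂ * δ ^ (1 - α) / (1 - α)) := by ring
        _ ≤ M * (1 / 2) := this
    linarith
  -- split the integral
  have hMsplit : M = (∫ y in Ioc (0:ℝ) δ, φ y) + ∫ y in Ioc δ 1, φ y := by
    rw [hMdef, ← integral_Ioc_eq_integral_Ioo,
      ← Ioc_union_Ioc_eq_Ioc hδ.le hδ1.le]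
    exact setIntegral_union (Ioc_disjoint_Ioc_of_le le_rfl) measurableSet_Ioc
      (hφint.mono_set (Ioc_subset_Ioc_right hδ1.le))
      (hφint.mono_set (Ioc_subset_Ioc_left hδ.le))
  have hlow : M / 2 ≤ ∫ y in Ioc δ 1, φ y := by linarith
  -- upper bound the tail integral by the constant φ x * C
  have hup : ∫ y in Ioc δ 1, φ y ≤ φ x * C := by
    have h1 : ∫ y in Ioc δ 1, φ y ≤ ∫ _y in Ioc δ 1, φ x * C := by
      apply setIntegral_mono_on
      · exact hφint.mono_set (Ioc_subset_Ioc_left hδ.le)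
      · exact integrableOn_const (by simp [Real.volume_Ioc])
      · exact measurableSet_Ioc
      · intro y hy
        exact hkey y ⟨hy.1.le, hy.2⟩
    have h2 : ∫ _y in Ioc δ 1, φ x * C = (1 - δ) * (φ x * C) := by
      rw [setIntegral_const]
      rw [Real.volume_real_Ioc_of_le hδ1.le]
      rw [smul_eq_mul]
    rw [h2] at h1
    have : (1 - δ) * (φ x * C) ≤ φ x * C := by
      nlinarith [mul_nonneg hφx hCpos.le]
    linarith
  -- conclude
  have hfinal : M / 2 ≤ φ x * C := le_trans hlow hup
  rw [ge_iff_le, div_mul_eq_mul_div, div_le_iff₀ (by positivity)]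
  rw [hCdef] at hfinal
  nlinarith [hPQ, hPpos, hEpos, hφx, mul_pos hPpos hEpos]
end

section
/- Let (Ω, m) be a probability space and let P be a linear operator on L¹(m) given by an integral kernel K : Ω × Ω → ℝ, i.e. (Pφ)(x) = ∫_Ω K(x,z)·φ(z) dm(z), with K(x,z) ≥ γ > 0 for all x,z, and P1 = 1 (i.e. ∫K(x,z)dm(x) = 1 for all z). Then for every φ ∈ L¹(m) with ∫_Ω φ dm = 0, ‖Pφ‖₁ ≤ (1−γ)·‖φ‖₁, and consequently ‖P^k φ‖₁ ≤ (1−γ)^k·‖φ‖₁ for all k ∈ ℕ. -/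
/-!
Split the kernel as `K = γ + L` with `L = K - γ ≥ 0`. Against a mean-zero `ψ` the constant part
integrates to zero, so `Pψ = ∫ L(·, z) ψ(z) dz`; since `L` is nonnegative with columns of mass
`1 - γ`, Fubini gives `‖Pψ‖₁ ≤ ∫∫ L(x, z) |ψ(z)| = (1 - γ) ‖ψ‖₁`. Fubini also shows that `P`
preserves integrability and the mean, so the bound iterates.
-/

open MeasureTheory Function Set

theorem Set.MapsTo.le_pow_mul_of_le_mul {α : Type*} {S : Set α} {f : α → α} (hf : MapsTo f S S)
    {N : α → ℝ} {r : ℝ} (hr : 0 ≤ r) (hN : ∀ a ∈ S, N (f a) ≤ r * N a) {a : α} (ha : a ∈ S)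
    (k : ℕ) : N (f^[k] a) ≤ r ^ k * N a := by
  induction k with
  | zero => simp
  | succ k ih =>
    rw [iterate_succ_apply', pow_succ', mul_assoc]
    exact (hN _ (hf.iterate k ha)).trans (mul_le_mul_of_nonneg_left ih hr)

section NonnegKernel

variable {Ω : Type*} [MeasurableSpace Ω] {μ ν : Measure Ω} [SFinite μ] [SFinite ν]
  {L : Ω → Ω → ℝ} {c : ℝ} {g : Ω → ℝ}

theorem integrable_prod_kernel_mul (hLmeas : Measurable (uncurry L))
    (hL_nonneg : ∀ x z, 0 ≤ L x z) (hL_int : ∀ z, Integrable (fun x ↦ L x z) μ)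
    (hL_col : ∀ z, ∫ x, L x z ∂μ = c) (hg : Integrable g ν) :
    Integrable (fun p : Ω × Ω ↦ L p.1 p.2 * g p.2) (μ.prod ν) := by
  have hmeas : AEStronglyMeasurable (fun p : Ω × Ω ↦ L p.1 p.2 * g p.2) (μ.prod ν) :=
    hLmeas.aestronglyMeasurable.mul hg.aestronglyMeasurable.comp_snd
  rw [integrable_prod_iff' hmeas]
  refine ⟨ae_of_all _ fun z ↦ (hL_int z).mul_const (g z), ?_⟩
  have hnorm : ∀ z, ∫ x, ‖L x z * g z‖ ∂μ = c * |g z| := fun z ↦ by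
    simp_rw [norm_mul, Real.norm_of_nonneg (hL_nonneg _ z), integral_mul_const, hL_col,
      Real.norm_eq_abs]
  simpa only [hnorm] using hg.abs.const_mul c

theorem integrable_integral_kernel_mul (hLmeas : Measurable (uncurry L))
    (hL_nonneg : ∀ x z, 0 ≤ L x z) (hL_int : ∀ z, Integrable (fun x ↦ L x z) μ)
    (hL_col : ∀ z, ∫ x, L x z ∂μ = c) (hg : Integrable g ν) :
    Integrable (fun x ↦ ∫ z, L x z * g z ∂ν) μ :=
  (integrable_prod_kernel_mul hLmeas hL_nonneg hL_int hL_col hg).integral_prod_left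

theorem integral_integral_kernel_mul (hLmeas : Measurable (uncurry L))
    (hL_nonneg : ∀ x z, 0 ≤ L x z) (hL_int : ∀ z, Integrable (fun x ↦ L x z) μ)
    (hL_col : ∀ z, ∫ x, L x z ∂μ = c) (hg : Integrable g ν) :
    ∫ x, ∫ z, L x z * g z ∂ν ∂μ = c * ∫ z, g z ∂ν := by
  rw [integral_integral_swap (integrable_prod_kernel_mul hLmeas hL_nonneg hL_int hL_col hg)]
  simp_rw [integral_mul_const, hL_col, integral_const_mul]

theorem integral_abs_integral_kernel_mul_le (hLmeas : Measurable (uncurry L))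
    (hL_nonneg : ∀ x z, 0 ≤ L x z) (hL_int : ∀ z, Integrable (fun x ↦ L x z) μ)
    (hL_col : ∀ z, ∫ x, L x z ∂μ = c) (hg : Integrable g ν) :
    ∫ x, |∫ z, L x z * g z ∂ν| ∂μ ≤ c * ∫ z, |g z| ∂ν := by
  have hpointwise : ∀ x, |∫ z, L x z * g z ∂ν| ≤ ∫ z, L x z * |g z| ∂ν := fun x ↦ by
    simpa only [abs_mul, abs_of_nonneg (hL_nonneg x _)] using
      abs_integral_le_integral_abs (f := fun z ↦ L x z * g z) (μ := ν)
  calc ∫ x, |∫ z, L x z * g z ∂ν| ∂μ ≤ ∫ x, ∫ z, L x z * |g z| ∂ν ∂μ :=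
        integral_mono (integrable_integral_kernel_mul hLmeas hL_nonneg hL_int hL_col hg).abs
          (integrable_integral_kernel_mul hLmeas hL_nonneg hL_int hL_col hg.abs) hpointwise
    _ = c * ∫ z, |g z| ∂ν := integral_integral_kernel_mul hLmeas hL_nonneg hL_int hL_col hg.abs

end NonnegKernel

theorem integral_mul_eq_integral_sub_const_mul {Ω : Type*} [MeasurableSpace Ω] {μ : Measure Ω}
    {f ψ : Ω → ℝ} (γ : ℝ) (hf : Integrable (fun z ↦ (f z - γ) * ψ z) μ) (hψ : Integrable ψ μ)
    (hψ0 : ∫ z, ψ z ∂μ = 0) : ∫ z, f z * ψ z ∂μ = ∫ z, (f z - γ) * ψ z ∂μ := by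
  have hsplit : ∀ z, f z * ψ z = (f z - γ) * ψ z + γ * ψ z := fun z ↦ by ring
  simp_rw [hsplit, integral_add hf (hψ.const_mul γ), integral_const_mul, hψ0, mul_zero, add_zero]

section Doeblin

variable {Ω : Type*} [MeasurableSpace Ω] {μ : Measure Ω} [IsProbabilityMeasure μ]
  {K : Ω → Ω → ℝ} {γ : ℝ}

theorem integrable_kernel_sub_const (hKnorm : ∀ z, ∫ x, K x z ∂μ = 1) (z : Ω) :
    Integrable (fun x ↦ K x z - γ) μ :=
  (Integrable.of_integral_ne_zero (by simp [hKnorm z])).sub (integrable_const γ)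

theorem integral_kernel_sub_const (hKnorm : ∀ z, ∫ x, K x z ∂μ = 1) (z : Ω) :
    ∫ x, K x z - γ ∂μ = 1 - γ := by
  rw [integral_sub (Integrable.of_integral_ne_zero (by simp [hKnorm z])) (integrable_const γ),
    hKnorm z, integral_const, probReal_univ, one_smul]

theorem doeblin_step (hKmeas : Measurable (uncurry K)) (hKlow : ∀ x z, γ ≤ K x z)
    (hKnorm : ∀ z, ∫ x, K x z ∂μ = 1) {ψ : Ω → ℝ} (hψ : Integrable ψ μ)
    (hψ0 : ∫ z, ψ z ∂μ = 0) :
    Integrable (fun x ↦ ∫ z, K x z * ψ z ∂μ) μ ∧ ∫ x, ∫ z, K x z * ψ z ∂μ ∂μ = 0 ∧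
      ∫ x, |∫ z, K x z * ψ z ∂μ| ∂μ ≤ (1 - γ) * ∫ z, |ψ z| ∂μ := by
  have hLmeas : Measurable (uncurry fun x z ↦ K x z - γ) := hKmeas.sub_const γ
  have hL_nonneg : ∀ x z, 0 ≤ K x z - γ := fun x z ↦ sub_nonneg.2 (hKlow x z)
  have hL_int := integrable_kernel_sub_const (γ := γ) hKnorm
  have hL_col := integral_kernel_sub_const (γ := γ) hKnorm
  have hPL : (fun x ↦ ∫ z, K x z * ψ z ∂μ) =ᵐ[μ] fun x ↦ ∫ z, (K x z - γ) * ψ z ∂μ := by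
    filter_upwards [(integrable_prod_kernel_mul hLmeas hL_nonneg hL_int hL_col hψ).prod_right_ae]
      with x hx
    exact integral_mul_eq_integral_sub_const_mul γ hx hψ hψ0
  refine ⟨(integrable_integral_kernel_mul hLmeas hL_nonneg hL_int hL_col hψ).congr hPL.symm,
    ?_, ?_⟩
  · rw [integral_congr_ae hPL, integral_integral_kernel_mul hLmeas hL_nonneg hL_int hL_col hψ,
      hψ0, mul_zero]
  · exact (integral_congr_ae (hPL.fun_comp abs)).trans_le
      (integral_abs_integral_kernel_mul_le hLmeas hL_nonneg hL_int hL_col hψ)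

end Doeblin

theorem doeblin_contraction_general
    {Ω : Type*} [MeasureSpace Ω] [IsProbabilityMeasure (volume : Measure Ω)]
    (K : Ω → Ω → ℝ) (γ : ℝ)
    (hKmeas : Measurable (Function.uncurry K))
    (hKlow : ∀ x z, γ ≤ K x z)
    (hKnorm : ∀ z, ∫ x, K x z = 1)
    (P : (Ω → ℝ) → (Ω → ℝ))
    (hP : ∀ φ x, P φ x = ∫ z, K x z * φ z)
    (φ : Ω → ℝ) (hφ : Integrable φ) (hφ0 : ∫ x, φ x = 0) :
    (∫ x, |P φ x|) ≤ (1 - γ) * ∫ x, |φ x| ∧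
      ∀ k : ℕ, (∫ x, |P^[k] φ x|) ≤ (1 - γ) ^ k * ∫ x, |φ x| := by
  let S : Set (Ω → ℝ) := {ψ | Integrable ψ ∧ ∫ x, ψ x = 0}
  have hPK : ∀ ψ, P ψ = fun x ↦ ∫ z, K x z * ψ z := fun ψ ↦ funext (hP ψ)
  have hmaps : MapsTo P S S := fun ψ ⟨hψ, hψ0⟩ ↦ by
    obtain ⟨hint, hmean, -⟩ := doeblin_step hKmeas hKlow hKnorm hψ hψ0
    rw [hPK]
    exact ⟨hint, hmean⟩
  have hcontr : ∀ ψ ∈ S, ∫ x, |P ψ x| ≤ (1 - γ) * ∫ x, |ψ x| := fun ψ ⟨hψ, hψ0⟩ ↦ by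
    rw [hPK]
    exact (doeblin_step hKmeas hKlow hKnorm hψ hψ0).2.2
  obtain ⟨z⟩ := nonempty_of_isProbabilityMeasure (volume : Measure Ω)
  have hγ1 : 0 ≤ 1 - γ :=
    integral_kernel_sub_const hKnorm z ▸ integral_nonneg fun x ↦ sub_nonneg.2 (hKlow x z)
  exact ⟨hcontr φ ⟨hφ, hφ0⟩,
    hmaps.le_pow_mul_of_le_mul (N := fun ψ ↦ ∫ x, |ψ x|) hγ1 hcontr ⟨hφ, hφ0⟩⟩

theorem doeblin_contraction
    {Ω : Type*} [MeasureSpace Ω] [IsProbabilityMeasure (volume : Measure Ω)]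
    (K : Ω → Ω → ℝ) (γ : ℝ) (hγ : 0 < γ)
    (hKmeas : Measurable (Function.uncurry K))
    (hKlow : ∀ x z, γ ≤ K x z)
    (hKnorm : ∀ z, ∫ x, K x z = 1)
    (P : (Ω → ℝ) → (Ω → ℝ))
    (hP : ∀ φ x, P φ x = ∫ z, K x z * φ z)
    (φ : Ω → ℝ) (hφ : Integrable φ) (hφ0 : ∫ x, φ x = 0) :
    (∫ x, |P φ x|) ≤ (1 - γ) * ∫ x, |φ x| ∧
      ∀ k : ℕ, (∫ x, |P^[k] φ x|) ≤ (1 - γ) ^ k * ∫ x, |φ x| :=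
  doeblin_contraction_general K γ hKmeas hKlow hKnorm P hP φ hφ hφ0
end

section
/- Let 0 < α < 1, a₁,b₁ > 0, c₂ > 0, and let φ : (0,1) → ℝ be measurable with ∫₀¹ φ dx = 1, φ(x) ≤ 2c₂·x^{−α}, and |φ(x)−φ(y)| ≤ 2c₂·ε·(a₁·x^{−1−α} + b₁·x^{−α}) whenever |x−y| ≤ ε. Let A_ε φ(x) = (1/(2ε))·∫_{x−ε}^{x+ε} φ(y) dy (computed on the circle ℝ/ℤ). Then there is a constant k₁ = 18·c₂·max{a₁,b₁,1}/(α(1−α)) such that ‖φ − A_ε φ‖_{L¹} ≤ k₁·ε^{1−α}. -/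
/-!
Since `x^(-α) ≤ x^(-1-α)` on `(0, 1)`, the hypothesis says `|φ x - φ y| ≤ K ε x^(-1-α)` for
`|x - y| ≤ ε`, with `K = 4 c₂ max(a₁, b₁, 1)`. For `x ≥ ε` the averaging error is then at most
`K ε x^(-1-α)`, whose integral over `[ε, 1]` is at most `K ε^(1-α) / α`. For `x < ε` the window
`(x - ε, x + ε)` is split at `0` and `x`. On `(0, x]` the bound at `x` costs `x · K ε x^(-1-α)`,
on `(x, x + ε)` the bound at `y` integrates to `O(ε x^(-α))`, and the part left of `0` is, by
periodicity, next to `1`, where `φ` is compared with `φ x` by chaining steps of length `ε`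
across `(0, 1)` at total cost `∫ₓ¹ K t^(-1-α) dt ≤ K x^(-α) / α`. So the error is `O(x^(-α))`
on `(0, ε)`, and integrating gives `O(ε^(1-α))` there as well.
-/

open Set MeasureTheory intervalIntegral

theorem integral_rpow_neg_one_sub_le {α x y : ℝ} (hα : 0 < α) (hx : 0 < x) (hxy : x ≤ y) :
    ∫ t in x..y, t ^ (-1 - α) ≤ x ^ (-α) / α := by
  rw [integral_rpow (Or.inr ⟨by linarith, notMem_uIcc_of_lt hx (hx.trans_le hxy)⟩),
    show -1 - α + 1 = -α by ring,
    show ∀ a b : ℝ, (a - b) / -α = (b - a) / α from fun a b => by ring]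
  have : 0 ≤ y ^ (-α) := Real.rpow_nonneg (hx.le.trans hxy) _
  gcongr
  linarith

theorem rpow_neg_one_sub_le_four {α t : ℝ} (hα₀ : -1 ≤ α) (hα₁ : α ≤ 1)
    (ht : 1 / 2 ≤ t) :
    t ^ (-1 - α) ≤ 4 :=
  calc t ^ (-1 - α) ≤ (1 / 2) ^ (-1 - α) :=
        Real.rpow_le_rpow_of_nonpos (by norm_num) ht (by linarith)
    _ ≤ (1 / 2) ^ (-2 : ℝ) :=
        Real.rpow_le_rpow_of_exponent_ge (by norm_num) (by norm_num) (by linarith)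
    _ = 4 := by norm_num [Real.rpow_neg]

theorem abs_sub_le_integral_add_of_abs_sub_le {f g : ℝ → ℝ} {ε : ℝ} (hε : 0 < ε)
    (hg : AntitoneOn g (Ioo 0 1)) (hg₀ : ∀ t ∈ Ioo (0 : ℝ) 1, 0 ≤ g t)
    (hf : ∀ x ∈ Ioo (0 : ℝ) 1, ∀ y, |x - y| ≤ ε → |f x - f y| ≤ ε * g x)
    {x y : ℝ} (hx : 0 < x) (hxy : x ≤ y) (hy : y < 1) :
    |f x - f y| ≤ (∫ t in x..y, g t) + ε * g y := by
  -- Each step `[z, z + ε]` uses `hf` at `z + ε`, where `g` is smallest on the step, so its cost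
  -- `ε g (z + ε)` is at most `∫ g` over the step; only the last, shorter step costs `ε g y`.
  have hint {a b : ℝ} (ha : 0 < a) (hab : a ≤ b) (hb : b < 1) :
      IntervalIntegrable g volume a b :=
    AntitoneOn.intervalIntegrable <| hg.mono <| by
      rw [uIcc_of_le hab]; exact Icc_subset_Ioo ha hb
  have hy₀ : y ∈ Ioo (0 : ℝ) 1 := ⟨hx.trans_le hxy, hy⟩
  have one_step (x : ℝ) (hx : 0 < x) (hxy : x ≤ y) (hyx : y ≤ x + ε) :
      |f x - f y| ≤ (∫ t in x..y, g t) + ε * g y := by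
    have h := hf y hy₀ x (by rw [abs_of_nonneg (by linarith)]; linarith)
    have : 0 ≤ ∫ t in x..y, g t :=
      integral_nonneg hxy fun t ht => hg₀ t ⟨hx.trans_le ht.1, ht.2.trans_lt hy⟩
    rw [abs_sub_comm] at h
    linarith
  obtain ⟨n, hn⟩ := exists_nat_ge ((y - x) / ε)
  rw [div_le_iff₀ hε] at hn
  induction n generalizing x with
  | zero => exact one_step x hx hxy (by simp only [Nat.cast_zero, zero_mul] at hn; linarith)
  | succ n ih =>
    rcases le_or_gt y (x + ε) with hyx | hxy'
    · exact one_step x hx hxy hyx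
    have hz : x + ε ∈ Ioo (0 : ℝ) 1 := ⟨by positivity, by linarith⟩
    have hstep : |f x - f (x + ε)| ≤ ∫ t in x..x + ε, g t :=
      calc |f x - f (x + ε)| = |f (x + ε) - f x| := abs_sub_comm _ _
        _ ≤ ε * g (x + ε) := hf _ hz x (by simp [abs_of_pos hε])
        _ = ∫ _ in x..x + ε, g (x + ε) := by simp
        _ ≤ ∫ t in x..x + ε, g t :=
          integral_mono_on (by linarith) intervalIntegrable_const
            (hint hx (by linarith) hz.2) fun t ht =>
              hg ⟨hx.trans_le ht.1, ht.2.trans_lt hz.2⟩ hz ht.2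
    have hrest := ih hz.1 hxy'.le (by push_cast at hn; linarith)
    calc |f x - f y| ≤ |f x - f (x + ε)| + |f (x + ε) - f y| := abs_sub_le _ _ _
      _ ≤ (∫ t in x..x + ε, g t) + ((∫ t in x + ε..y, g t) + ε * g y) :=
        add_le_add hstep hrest
      _ = (∫ t in x..y, g t) + ε * g y := by
        rw [← add_assoc, integral_add_adjacent_intervals (hint hx (by linarith) hz.2)
          (hint hz.1 hxy'.le hy)]

theorem intervalIntegrable_of_abs_sub_le {f : ℝ → ℝ} (hf : Measurable f) {a b x B : ℝ}
    (hab : a ≤ b) (h : ∀ y ∈ Ioo a b, |f x - f y| ≤ B) :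
    IntervalIntegrable f volume a b := by
  rw [intervalIntegrable_iff_integrableOn_Ioo_of_le hab]
  refine Measure.integrableOn_of_bounded measure_Ioo_lt_top.ne hf.aestronglyMeasurable
    (M := |f x| + B) (ae_restrict_of_forall_mem measurableSet_Ioo fun y hy => ?_)
  have := abs_sub_abs_le_abs_sub (f y) (f x)
  rw [abs_sub_comm] at this
  rw [Real.norm_eq_abs]
  linarith [h y hy]

/-- The operator `A_ε`; for `1`-periodic `f` this is the average over the arc of radius `ε` in
`ℝ/ℤ`. -/
noncomputable def windowAverage (ε : ℝ) (f : ℝ → ℝ) (x : ℝ) : ℝ :=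
  1 / (2 * ε) * ∫ y in Ioo (x - ε) (x + ε), f y

theorem abs_sub_windowAverage_le_integral {f : ℝ → ℝ} {ε x : ℝ} (hε : 0 < ε)
    (hf : IntervalIntegrable f volume (x - ε) (x + ε)) :
    |f x - windowAverage ε f x| ≤ 1 / (2 * ε) * ∫ y in x - ε..x + ε, |f x - f y| := by
  have hle : x - ε ≤ x + ε := by linarith
  have hdiff :
      f x - windowAverage ε f x = 1 / (2 * ε) * ∫ y in x - ε..x + ε, (f x - f y) := by
    rw [windowAverage, ← integral_Ioc_eq_integral_Ioo, ← integral_of_le hle,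
      integral_sub intervalIntegrable_const hf, intervalIntegral.integral_const, smul_eq_mul]
    field_simp
    ring
  rw [hdiff, abs_mul, abs_of_pos (by positivity)]
  gcongr
  exact abs_integral_le_integral_abs hle

theorem abs_sub_windowAverage_le_of_forall {f : ℝ → ℝ} (hf : Measurable f) {ε x B : ℝ}
    (hε : 0 < ε) (h : ∀ y ∈ Ioo (x - ε) (x + ε), |f x - f y| ≤ B) :
    |f x - windowAverage ε f x| ≤ B := by
  have hle : x - ε ≤ x + ε := by linarith
  have hint := intervalIntegrable_of_abs_sub_le hf hle h
  have hmono : ∫ y in x - ε..x + ε, |f x - f y| ≤ ∫ _ in x - ε..x + ε, B :=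
    integral_mono_on_of_le_Ioo hle (intervalIntegrable_const.sub hint).abs
      intervalIntegrable_const h
  calc |f x - windowAverage ε f x| ≤ 1 / (2 * ε) * ∫ y in x - ε..x + ε, |f x - f y| :=
        abs_sub_windowAverage_le_integral hε hint
    _ ≤ 1 / (2 * ε) * ∫ _ in x - ε..x + ε, B := by gcongr
    _ = B := by
      rw [intervalIntegral.integral_const, smul_eq_mul]
      field_simp
      ring

def OscillationBound (f : ℝ → ℝ) (K α ε : ℝ) : Prop :=
  ∀ x ∈ Ioo (0 : ℝ) 1, ∀ y, |x - y| ≤ ε → |f x - f y| ≤ K * ε * x ^ (-1 - α)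

section OscillationBound

variable {f : ℝ → ℝ} {K α ε x : ℝ}

theorem OscillationBound.abs_sub_le_of_mem_Ioo (hosc : OscillationBound f K α ε)
    (hx : x ∈ Ioo 0 1) {y : ℝ} (hy : y ∈ Ioo (x - ε) (x + ε)) :
    |f x - f y| ≤ K * ε * x ^ (-1 - α) :=
  hosc x hx y (abs_le.mpr ⟨by linarith [hy.2], by linarith [hy.1]⟩)

theorem OscillationBound.abs_sub_windowAverage_le (hosc : OscillationBound f K α ε)
    (hmeas : Measurable f) (hε : 0 < ε) (hx : x ∈ Ioo 0 1) :
    |f x - windowAverage ε f x| ≤ K * ε * x ^ (-1 - α) :=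
  abs_sub_windowAverage_le_of_forall hmeas hε fun _ => hosc.abs_sub_le_of_mem_Ioo hx

theorem OscillationBound.abs_sub_le_across_zero (hosc : OscillationBound f K α ε)
    (hper : Function.Periodic f 1) (hα : 0 < α) (hα₁ : α < 1) (hK : 0 ≤ K)
    (hε₁ : ε < 1 / 2) (hx : x ∈ Ioo 0 ε) {y : ℝ} (hy : y ∈ Ioo (x - ε) 0) :
    |f x - f y| ≤ K * (x ^ (-α) / α + 4 * ε) := by
  obtain ⟨hx₀, hxε⟩ := hx
  have hε : 0 < ε := hx₀.trans hxε
  have hchain := abs_sub_le_integral_add_of_abs_sub_le (f := f) (g := fun t => K * t ^ (-1 - α))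
    hε (fun s hs t _ hst => mul_le_mul_of_nonneg_left
      (Real.rpow_le_rpow_of_nonpos hs.1 hst (by linarith)) hK)
    (fun t ht => mul_nonneg hK (Real.rpow_nonneg ht.1.le _))
    (fun s hs t hst => (hosc s hs t hst).trans_eq (by ring))
    hx₀ (by linarith [hy.1]) (by linarith [hy.2] : y + 1 < 1)
  rw [hper y, intervalIntegral.integral_const_mul] at hchain
  have hint := integral_rpow_neg_one_sub_le hα hx₀ (by linarith [hy.1] : x ≤ y + 1)
  have hend :=
    rpow_neg_one_sub_le_four (by linarith) hα₁.le (by linarith [hy.1] : 1 / 2 ≤ y + 1)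
  calc |f x - f y| ≤ K * (∫ t in x..y + 1, t ^ (-1 - α)) + ε * (K * (y + 1) ^ (-1 - α)) :=
        hchain
    _ ≤ K * (x ^ (-α) / α) + ε * (K * 4) := by gcongr
    _ = K * (x ^ (-α) / α + 4 * ε) := by ring

theorem OscillationBound.integral_abs_sub_le_across_zero (hosc : OscillationBound f K α ε)
    (hper : Function.Periodic f 1) (hα : 0 < α) (hα₁ : α < 1) (hK : 0 ≤ K)
    (hε₁ : ε < 1 / 2) (hx : x ∈ Ioo 0 ε)
    (hint : IntervalIntegrable (fun y => |f x - f y|) volume (x - ε) 0) :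
    ∫ y in x - ε..0, |f x - f y| ≤ ε * (K * (x ^ (-α) / α + 4 * ε)) := by
  obtain ⟨hx₀, hxε⟩ := hx
  have hε : 0 < ε := hx₀.trans hxε
  have hA : 0 ≤ K * (x ^ (-α) / α + 4 * ε) := by positivity
  calc ∫ y in x - ε..0, |f x - f y| ≤ ∫ _ in x - ε..0, K * (x ^ (-α) / α + 4 * ε) :=
        integral_mono_on_of_le_Ioo (by linarith) hint intervalIntegrable_const
          fun _ => hosc.abs_sub_le_across_zero hper hα hα₁ hK hε₁ ⟨hx₀, hxε⟩
    _ ≤ ε * (K * (x ^ (-α) / α + 4 * ε)) := by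
      rw [intervalIntegral.integral_const, smul_eq_mul]
      gcongr
      linarith

theorem OscillationBound.integral_abs_sub_le_left (hosc : OscillationBound f K α ε)
    (hx : x ∈ Ioo 0 1) (hxε : x ≤ ε)
    (hint : IntervalIntegrable (fun y => |f x - f y|) volume 0 x) :
    ∫ y in (0 : ℝ)..x, |f x - f y| ≤ K * ε * x ^ (-α) :=
  calc ∫ y in (0 : ℝ)..x, |f x - f y| ≤ ∫ _ in (0 : ℝ)..x, K * ε * x ^ (-1 - α) :=
        integral_mono_on_of_le_Ioo hx.1.le hint intervalIntegrable_const fun y hy =>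
          hosc x hx y (abs_le.mpr ⟨by linarith [hy.2, hx.1], by linarith [hy.1]⟩)
    _ = K * ε * x ^ (-α) := by
      rw [intervalIntegral.integral_const, smul_eq_mul, sub_zero,
        show -α = -1 - α + 1 by ring, Real.rpow_add_one hx.1.ne']
      ring

theorem OscillationBound.integral_abs_sub_le_right (hosc : OscillationBound f K α ε)
    (hα : 0 < α) (hK : 0 ≤ K) (hε : 0 < ε) (hx : 0 < x) (hxε : x + ε ≤ 1)
    (hint : IntervalIntegrable (fun y => |f x - f y|) volume x (x + ε)) :
    ∫ y in x..x + ε, |f x - f y| ≤ K * ε * (x ^ (-α) / α) :=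
  calc ∫ y in x..x + ε, |f x - f y| ≤ ∫ y in x..x + ε, K * ε * y ^ (-1 - α) :=
        integral_mono_on_of_le_Ioo (by linarith) hint
          ((intervalIntegral.intervalIntegrable_rpow
            (Or.inr (notMem_uIcc_of_lt hx (by linarith)))).const_mul _) fun y hy => by
          rw [abs_sub_comm]
          exact hosc y ⟨hx.trans hy.1, by linarith [hy.2]⟩ x
            (abs_le.mpr ⟨by linarith [hy.1], by linarith [hy.2]⟩)
    _ ≤ K * ε * (x ^ (-α) / α) := by
      rw [intervalIntegral.integral_const_mul]
      gcongr
      exact integral_rpow_neg_one_sub_le hα hx (by linarith)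

theorem OscillationBound.abs_sub_windowAverage_le_near_zero (hosc : OscillationBound f K α ε)
    (hmeas : Measurable f) (hper : Function.Periodic f 1) (hα : 0 < α) (hα₁ : α < 1)
    (hK : 0 ≤ K) (hε₁ : ε < 1 / 2) (hx : x ∈ Ioo 0 ε) :
    |f x - windowAverage ε f x| ≤ K / 2 * ((2 / α + 1) * x ^ (-α) + 4 * ε) := by
  obtain ⟨hx₀, hxε⟩ := hx
  have hε : 0 < ε := hx₀.trans hxε
  have hx₁ : x ∈ Ioo (0 : ℝ) 1 := ⟨hx₀, by linarith⟩
  have hf := intervalIntegrable_of_abs_sub_le hmeas (by linarith) fun _ =>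
    hosc.abs_sub_le_of_mem_Ioo hx₁
  have hint {a b : ℝ} (ha : x - ε ≤ a) (hab : a ≤ b) (hb : b ≤ x + ε) :
      IntervalIntegrable (fun y => |f x - f y|) volume a b :=
    (intervalIntegrable_const.sub hf).abs.mono_set <| by
      rw [uIcc_of_le hab, uIcc_of_le (by linarith)]; exact Icc_subset_Icc ha hb
  calc |f x - windowAverage ε f x| ≤ 1 / (2 * ε) * ∫ y in x - ε..x + ε, |f x - f y| :=
        abs_sub_windowAverage_le_integral hε hf
    _ = 1 / (2 * ε) * ((∫ y in x - ε..0, |f x - f y|) + (∫ y in (0 : ℝ)..x, |f x - f y|)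
          + ∫ y in x..x + ε, |f x - f y|) := by
        rw [integral_add_adjacent_intervals (hint le_rfl (by linarith) (by linarith))
            (hint (by linarith) hx₀.le (by linarith)),
          integral_add_adjacent_intervals (hint le_rfl (by linarith) (by linarith))
            (hint (by linarith) (by linarith) le_rfl)]
    _ ≤ 1 / (2 * ε) * (ε * (K * (x ^ (-α) / α + 4 * ε)) + K * ε * x ^ (-α)
          + K * ε * (x ^ (-α) / α)) := by
        gcongr
        · exact hosc.integral_abs_sub_le_across_zero hper hα hα₁ hK hε₁ ⟨hx₀, hxε⟩
            (hint le_rfl (by linarith) (by linarith))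
        · exact hosc.integral_abs_sub_le_left hx₁ hxε.le
            (hint (by linarith) hx₀.le (by linarith))
        · exact hosc.integral_abs_sub_le_right hα hK hε hx₀ (by linarith)
            (hint (by linarith) (by linarith) le_rfl)
    _ = K / 2 * ((2 / α + 1) * x ^ (-α) + 4 * ε) := by
        field_simp
        ring

theorem OscillationBound.integral_abs_sub_windowAverage_near_zero_le
    (hosc : OscillationBound f K α ε) (hmeas : Measurable f) (hper : Function.Periodic f 1)
    (hα : 0 < α) (hα₁ : α < 1) (hK : 0 ≤ K) (hε : 0 < ε) (hε₁ : ε < 1 / 2)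
    (hF : IntervalIntegrable (fun x => |f x - windowAverage ε f x|) volume 0 ε) :
    ∫ x in (0 : ℝ)..ε, |f x - windowAverage ε f x|
      ≤ K / 2 * ((2 / α + 1) * (ε ^ (1 - α) / (1 - α)) + 4 * ε ^ 2) := by
  have hrpow : IntervalIntegrable (fun x : ℝ => x ^ (-α)) volume 0 ε :=
    intervalIntegral.intervalIntegrable_rpow' (by linarith)
  calc ∫ x in (0 : ℝ)..ε, |f x - windowAverage ε f x|
      ≤ ∫ x in (0 : ℝ)..ε, K / 2 * ((2 / α + 1) * x ^ (-α) + 4 * ε) :=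
        integral_mono_on_of_le_Ioo hε.le hF
          (((hrpow.const_mul _).add intervalIntegrable_const).const_mul _)
          fun _ => hosc.abs_sub_windowAverage_le_near_zero hmeas hper hα hα₁ hK hε₁
    _ = K / 2 * ((2 / α + 1) * (ε ^ (1 - α) / (1 - α)) + 4 * ε ^ 2) := by
        rw [intervalIntegral.integral_const_mul,
          intervalIntegral.integral_add (hrpow.const_mul _) intervalIntegrable_const,
          intervalIntegral.integral_const_mul, integral_rpow (Or.inl (by linarith)),
          intervalIntegral.integral_const, Real.zero_rpow (by linarith),
          show -α + 1 = 1 - α by ring, smul_eq_mul]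
        ring

theorem OscillationBound.integral_abs_sub_windowAverage_away_from_zero_le
    (hosc : OscillationBound f K α ε) (hmeas : Measurable f) (hα : 0 < α) (hK : 0 ≤ K)
    (hε : 0 < ε) (hε₁ : ε ≤ 1)
    (hF : IntervalIntegrable (fun x => |f x - windowAverage ε f x|) volume ε 1) :
    ∫ x in ε..1, |f x - windowAverage ε f x| ≤ K * ε ^ (1 - α) / α :=
  calc ∫ x in ε..1, |f x - windowAverage ε f x| ≤ ∫ x in ε..1, K * ε * x ^ (-1 - α) :=
        integral_mono_on_of_le_Ioo hε₁ hF
          ((intervalIntegral.intervalIntegrable_rpow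
            (Or.inr (notMem_uIcc_of_lt hε one_pos))).const_mul _)
          fun x hx => hosc.abs_sub_windowAverage_le hmeas hε ⟨hε.trans hx.1, hx.2⟩
    _ ≤ K * ε * (ε ^ (-α) / α) := by
        rw [intervalIntegral.integral_const_mul]
        gcongr
        exact integral_rpow_neg_one_sub_le hα hε hε₁
    _ = K * ε ^ (1 - α) / α := by
        rw [show 1 - α = -α + 1 by ring, Real.rpow_add_one hε.ne']
        ring

theorem OscillationBound.integral_abs_sub_windowAverage_le (hosc : OscillationBound f K α ε)
    (hmeas : Measurable f) (hper : Function.Periodic f 1) (hα : 0 < α) (hα₁ : α < 1)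
    (hK : 0 ≤ K) (hε : 0 < ε) (hε₁ : ε < 1 / 2) :
    ∫ x in Ioo (0 : ℝ) 1, |f x - windowAverage ε f x|
      ≤ 3 * K / (α * (1 - α)) * ε ^ (1 - α) := by
  have hα' : 0 < 1 - α := by linarith
  by_cases hF : IntegrableOn (fun x => |f x - windowAverage ε f x|) (Ioo 0 1)
  swap
  · rw [integral_undef hF]
    positivity
  rw [← intervalIntegrable_iff_integrableOn_Ioo_of_le zero_le_one] at hF
  have hεmem : ε ∈ uIcc (0 : ℝ) 1 := by
    rw [uIcc_of_le zero_le_one]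
    exact ⟨hε.le, by linarith⟩
  have hF₀ := hF.mono_set <| uIcc_subset_uIcc left_mem_uIcc hεmem
  have hF₁ := hF.mono_set <| uIcc_subset_uIcc hεmem right_mem_uIcc
  have hεE : 2 * ε ^ 2 ≤ ε ^ (1 - α) := by
    have := Real.self_le_rpow_of_le_one hε.le (by linarith) (by linarith : 1 - α ≤ 1)
    nlinarith
  have hcoef : (2 / α + 1) / (1 - α) / 2 + 1 / α + 1 ≤ 3 / (α * (1 - α)) := by
    rw [← sub_nonneg, show 3 / (α * (1 - α)) - ((2 / α + 1) / (1 - α) / 2 + 1 / α + 1)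
        = (2 - α + 2 * α ^ 2) / (2 * α * (1 - α)) by field_simp; ring]
    apply div_nonneg <;> nlinarith
  rw [← integral_Ioc_eq_integral_Ioo, ← integral_of_le zero_le_one,
    ← integral_add_adjacent_intervals hF₀ hF₁]
  set E := ε ^ (1 - α)
  calc _ ≤ K / 2 * ((2 / α + 1) * (E / (1 - α)) + 4 * ε ^ 2) + K * E / α :=
        add_le_add
          (hosc.integral_abs_sub_windowAverage_near_zero_le hmeas hper hα hα₁ hK hε hε₁
            hF₀)
          (hosc.integral_abs_sub_windowAverage_away_from_zero_le hmeas hα hK hε (by linarith)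
            hF₁)
    _ = K * E * ((2 / α + 1) / (1 - α) / 2 + 1 / α) + K * (2 * ε ^ 2) := by ring
    _ ≤ K * E * ((2 / α + 1) / (1 - α) / 2 + 1 / α) + K * E := by gcongr
    _ = K * E * ((2 / α + 1) / (1 - α) / 2 + 1 / α + 1) := by ring
    _ ≤ K * E * (3 / (α * (1 - α))) := by gcongr
    _ = 3 * K / (α * (1 - α)) * E := by ring

end OscillationBound

theorem oscillationBound_of_abs_sub_le {f : ℝ → ℝ} {α a b c ε : ℝ} (hc : 0 ≤ c)
    (hε : 0 ≤ ε)
    (h : ∀ x ∈ Ioo (0 : ℝ) 1, ∀ y, |x - y| ≤ ε →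
      |f x - f y| ≤ 2 * c * ε * (a * x ^ (-1 - α) + b * x ^ (-α))) :
    OscillationBound f (4 * c * max (max a b) 1) α ε := by
  intro x hx y hxy
  have ha : a ≤ max (max a b) 1 := (le_max_left _ _).trans (le_max_left _ _)
  have hb : b ≤ max (max a b) 1 := (le_max_right _ _).trans (le_max_left _ _)
  have hM : 0 ≤ max (max a b) 1 := zero_le_one.trans (le_max_right _ _)
  have hpow : x ^ (-α) ≤ x ^ (-1 - α) :=
    Real.rpow_le_rpow_of_exponent_ge hx.1 hx.2.le (by linarith)
  have hpow₀ : 0 ≤ x ^ (-α) := Real.rpow_nonneg hx.1.le _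
  calc |f x - f y| ≤ 2 * c * ε * (a * x ^ (-1 - α) + b * x ^ (-α)) := h x hx y hxy
    _ ≤ 2 * c * ε * (max (max a b) 1 * x ^ (-1 - α) + max (max a b) 1 * x ^ (-1 - α)) := by
        refine mul_le_mul_of_nonneg_left (add_le_add ?_ ?_) (by positivity)
        · exact mul_le_mul_of_nonneg_right ha (Real.rpow_nonneg hx.1.le _)
        · exact (mul_le_mul_of_nonneg_right hb hpow₀).trans (mul_le_mul_of_nonneg_left hpow hM)
    _ = 4 * c * max (max a b) 1 * ε * x ^ (-1 - α) := by ring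

theorem averaging_operator_estimate_general
    (α a₁ b₁ c₂ ε : ℝ) (hα : 0 < α) (hα1 : α < 1)
    (hc₂ : 0 < c₂)
    (hε : 0 < ε) (hε1 : ε < 1 / 2)
    (φ : ℝ → ℝ) (hper : ∀ x, φ (x + 1) = φ x)
    (hmeas : Measurable φ)
    (hosc : ∀ x ∈ Ioo (0:ℝ) 1, ∀ y : ℝ, |x - y| ≤ ε →
      |φ x - φ y| ≤ 2 * c₂ * ε * (a₁ * x ^ (-1 - α) + b₁ * x ^ (-α))) :
    (∫ x in Ioo (0:ℝ) 1,
        |φ x - (1 / (2 * ε)) * ∫ y in Ioo (x - ε) (x + ε), φ y|)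
      ≤ (18 * c₂ * max (max a₁ b₁) 1 / (α * (1 - α))) * ε ^ (1 - α) := by
  have hM : 1 ≤ max (max a₁ b₁) 1 := le_max_right _ _
  have hα' : 0 < 1 - α := by linarith
  calc _ ≤ 3 * (4 * c₂ * max (max a₁ b₁) 1) / (α * (1 - α)) * ε ^ (1 - α) :=
        (oscillationBound_of_abs_sub_le hc₂.le hε.le hosc).integral_abs_sub_windowAverage_le
          hmeas hper hα hα1 (by positivity) hε hε1
    _ ≤ 18 * c₂ * max (max a₁ b₁) 1 / (α * (1 - α)) * ε ^ (1 - α) := by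
        gcongr ?_ / _ * _
        nlinarith

theorem averaging_operator_estimate
    (α a₁ b₁ c₂ ε : ℝ) (hα : 0 < α) (hα1 : α < 1)
    (ha₁ : 0 < a₁) (hb₁ : 0 < b₁) (hc₂ : 0 < c₂)
    (hε : 0 < ε) (hε1 : ε < 1 / 2)
    (φ : ℝ → ℝ) (hper : ∀ x, φ (x + 1) = φ x)
    (hmeas : Measurable φ)
    (hnorm : ∫ x in Ioo (0:ℝ) 1, φ x = 1)
    (hupper : ∀ x ∈ Ioo (0:ℝ) 1, φ x ≤ 2 * c₂ * x ^ (-α))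
    (hosc : ∀ x ∈ Ioo (0:ℝ) 1, ∀ y : ℝ, |x - y| ≤ ε →
      |φ x - φ y| ≤ 2 * c₂ * ε * (a₁ * x ^ (-1 - α) + b₁ * x ^ (-α))) :
    (∫ x in Ioo (0:ℝ) 1,
        |φ x - (1 / (2 * ε)) * ∫ y in Ioo (x - ε) (x + ε), φ y|)
      ≤ (18 * c₂ * max (max a₁ b₁) 1 / (α * (1 - α))) * ε ^ (1 - α) :=
  averaging_operator_estimate_general α a₁ b₁ c₂ ε hα hα1 hc₂ hε hε1 φ hper hmeas hosc
end
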